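/- Define f₀(q,t;r) = −(1 + r cos t)·sin q/(r² + 2 + 2r cos t − 2 cos q − 2r cos q cos t)^{3/2} − (1 − r cos t)·sin q/(r² + 2 − 2r cos t − 2 cos q + 2r cos q cos t)^{3/2}. For each r ∈ (0,2) there exist constants C > 0 and q₀ > 0 such that for all t ∈ ℝ and all |q| ≤ q₀: | f₀(q,t;r) + (2/r³)·q − ((9 + r² + 9r² cos²t)/(3r⁵))·q³ | ≤ C·|q|⁵. In particular ∂f₀/∂q(0,t;r) = −2/r³ for all t. -/

import Mathlib

set_option maxHeartbeats 1000000

open Complex Finset in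
private lemma aux_sum5 (x : ℝ) : ∑ m ∈ Finset.range 5, ((x:ℂ)*I)^m/m.factorial
    = ((1 - x^2/2 + x^4/24 : ℝ) : ℂ) + ((x - x^3/6 : ℝ):ℂ)*I := by
  simp [Finset.sum_range_succ, Nat.factorial, mul_pow, pow_succ, Complex.I_mul_I]
  ring

open Complex Finset in
private lemma exp_rem5 (x : ℝ) (hx : |x| ≤ 1) :
    ‖Complex.exp (x*I) - ∑ m ∈ Finset.range 5, ((x:ℂ)*I)^m/m.factorial‖
      ≤ |x|^5 * (1/100) := by
  have h := Complex.exp_bound (x := (x:ℂ)*I) (by simpa using hx) (n := 5) (by norm_num)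
  have habs : ‖(x:ℂ)*I‖ = |x| := by simp
  rw [habs] at h
  calc _ ≤ |x|^5 * ((5+1 : ℝ) * ((Nat.factorial 5 : ℝ) * 5)⁻¹) := by exact_mod_cast h
    _ ≤ |x|^5 * (1/100) := by norm_num [Nat.factorial]

private lemma tri_abs (a b : ℂ) : ‖a - b‖ ≤ ‖a‖ + ‖b‖ := by
  calc ‖a - b‖ = ‖a + -b‖ := by rw [sub_eq_add_neg]
    _ ≤ ‖a‖ + ‖-b‖ := norm_add_le _ _
    _ = ‖a‖ + ‖b‖ := by rw [norm_neg]

open Complex Finset in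
private lemma sin_quintic {x : ℝ} (hx : |x| ≤ 1) :
    |Real.sin x - (x - x^3/6)| ≤ |x|^5 * (1/50) := by
  have e1 := exp_rem5 x hx
  have e2 := exp_rem5 (-x) (by rwa [abs_neg])
  have key : ((Real.sin x - (x - x^3/6) : ℝ) : ℂ) =
      ((Complex.exp ((-x:ℝ)*I) - ∑ m ∈ Finset.range 5, (((-x:ℝ):ℂ)*I)^m/m.factorial)
        - (Complex.exp ((x:ℝ)*I) - ∑ m ∈ Finset.range 5, ((x:ℂ)*I)^m/m.factorial)) * I / 2 := by
    rw [aux_sum5, aux_sum5, Complex.ofReal_sub, Complex.ofReal_sin, Complex.sin]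
    push_cast
    linear_combination (-(x:ℂ) + x^3/6) * Complex.I_sq
  calc |Real.sin x - (x - x^3/6)|
      = ‖((Real.sin x - (x - x^3/6) : ℝ) : ℂ)‖ := by rw [Complex.norm_real, Real.norm_eq_abs]
    _ = ‖((Complex.exp ((-x:ℝ)*I) - ∑ m ∈ Finset.range 5, (((-x:ℝ):ℂ)*I)^m/m.factorial)
        - (Complex.exp ((x:ℝ)*I) - ∑ m ∈ Finset.range 5, ((x:ℂ)*I)^m/m.factorial)) * I / 2‖ := by
        rw [key]
    _ ≤ (‖Complex.exp ((-x:ℝ)*I) - ∑ m ∈ Finset.range 5, (((-x:ℝ):ℂ)*I)^m/m.factorial‖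
        + ‖Complex.exp ((x:ℝ)*I) - ∑ m ∈ Finset.range 5, ((x:ℂ)*I)^m/m.factorial‖) * 1 / 2 := by
        rw [norm_div, norm_mul, Complex.norm_I, Complex.norm_two]
        gcongr
        exact tri_abs _ _
    _ ≤ (|(-x)|^5 * (1/100) + |x|^5*(1/100)) * 1 / 2 := by gcongr
    _ ≤ |x|^5 * (1/50) := by
        rw [abs_neg]
        nlinarith [pow_nonneg (abs_nonneg x) 5]

open Complex Finset in
private lemma cos_quintic {x : ℝ} (hx : |x| ≤ 1) :
    |Real.cos x - (1 - x^2/2 + x^4/24)| ≤ |x|^5 * (1/50) := by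
  have e1 := exp_rem5 x hx
  have e2 := exp_rem5 (-x) (by rwa [abs_neg])
  have key : ((Real.cos x - (1 - x^2/2 + x^4/24) : ℝ) : ℂ) =
      ((Complex.exp ((-x:ℝ)*I) - ∑ m ∈ Finset.range 5, (((-x:ℝ):ℂ)*I)^m/m.factorial)
        + (Complex.exp ((x:ℝ)*I) - ∑ m ∈ Finset.range 5, ((x:ℂ)*I)^m/m.factorial)) / 2 := by
    rw [aux_sum5, aux_sum5, Complex.ofReal_sub, Complex.ofReal_cos, Complex.cos]
    push_cast
    ring
  calc |Real.cos x - (1 - x^2/2 + x^4/24)|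
      = ‖((Real.cos x - (1 - x^2/2 + x^4/24) : ℝ) : ℂ)‖ := by rw [Complex.norm_real, Real.norm_eq_abs]
    _ = ‖((Complex.exp ((-x:ℝ)*I) - ∑ m ∈ Finset.range 5, (((-x:ℝ):ℂ)*I)^m/m.factorial)
        + (Complex.exp ((x:ℝ)*I) - ∑ m ∈ Finset.range 5, ((x:ℂ)*I)^m/m.factorial)) / 2‖ := by
        rw [key]
    _ ≤ (‖Complex.exp ((-x:ℝ)*I) - ∑ m ∈ Finset.range 5, (((-x:ℝ):ℂ)*I)^m/m.factorial‖
        + ‖Complex.exp ((x:ℝ)*I) - ∑ m ∈ Finset.range 5, ((x:ℂ)*I)^m/m.factorial‖) / 2 := by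
        rw [norm_div, Complex.norm_two]
        gcongr
        exact norm_add_le _ _
    _ ≤ (|(-x)|^5 * (1/100) + |x|^5*(1/100)) / 2 := by gcongr
    _ ≤ |x|^5 * (1/50) := by
        rw [abs_neg]
        nlinarith [pow_nonneg (abs_nonneg x) 5]

private lemma rpow32 {y : ℝ} (hy : 0 ≤ y) : y ^ ((3:ℝ)/2) = (Real.sqrt y)^3 := by
  rw [Real.sqrt_eq_rpow, ← Real.rpow_natCast (y ^ ((1:ℝ)/2)) 3, ← Real.rpow_mul hy]
  norm_num

private lemma inv_pow32_expand {r y : ℝ} (hr : 0 < r) (hy1 : r^2/2 ≤ y) (hy2 : y ≤ 3*r^2/2) :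
    |1 / y ^ ((3:ℝ)/2) - (1/r^3 - (3/2) * (y - r^2) / r^5)| ≤ 232 * (y - r^2)^2 / r^7 := by
  have hy0 : (0:ℝ) < y := lt_of_lt_of_le (by positivity) hy1
  set s := Real.sqrt y with hs
  have hs0 : 0 < s := Real.sqrt_pos.mpr hy0
  have hs2 : s^2 = y := Real.sq_sqrt hy0.le
  have hslo : r/2 ≤ s := by nlinarith
  have hshi : s ≤ 2*r := by nlinarith
  rw [rpow32 hy0.le, ← hs, ← hs2]
  have hid : 1/(s^3) - (1/r^3 - (3/2)*(s^2-r^2)/r^5)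
      = (s^2-r^2)^2 * (3*s^3+6*r*s^2+4*r^2*s+2*r^3) / (2*r^5*(r+s)^2*s^3) := by
    have h1 : s ≠ 0 := hs0.ne'
    have h2 : r ≠ 0 := hr.ne'
    have h3 : r + s ≠ 0 := by positivity
    field_simp
    ring
  rw [hid, abs_div, abs_of_nonneg (by positivity), abs_of_nonneg (by positivity)]
  have hN : 3*s^3+6*r*s^2+4*r^2*s+2*r^3 ≤ 58*r^3 := by nlinarith
  have hD : r^10/4 ≤ 2*r^5*(r+s)^2*s^3 := by
    have h1 : r^2 ≤ (r+s)^2 := by nlinarith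
    have h2 : (r/2)^3 ≤ s^3 := pow_le_pow_left₀ (by positivity) hslo 3
    calc r^10/4 = 2*r^5*r^2*((r/2)^3) := by ring
      _ ≤ 2*r^5*(r+s)^2*s^3 := by gcongr
  calc (s^2-r^2)^2 * (3*s^3+6*r*s^2+4*r^2*s+2*r^3) / (2*r^5*(r+s)^2*s^3)
      ≤ (s^2-r^2)^2 * (58*r^3) / (r^10/4) := by gcongr <;> positivity
    _ = 232 * (s^2-r^2)^2 / r^7 := by field_simp; ring

private lemma term_expand {r c q : ℝ} (hr : 0 < r) (hc : |c| ≤ 3) (hq1 : |q| ≤ 1)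
    (hq2 : |q| ≤ r/3) :
    |c * Real.sin q / (r^2 + 2*c*(1 - Real.cos q)) ^ ((3:ℝ)/2)
      - (c/r^3 * q - (c/(6*r^3) + 3*c^2/(2*r^5)) * q^3)|
    ≤ (1/r^3 + 14/r^5 + 6264/r^7) * |q|^5 := by
  have hq45 : |q|^5 ≤ |q|^4 := by
    calc |q|^5 = |q|^4*|q| := by ring
      _ ≤ |q|^4*1 := by gcongr
      _ = |q|^4 := by ring
  have hq35 : |q|^5 ≤ |q|^3 := by
    calc |q|^5 = |q|^3*|q|^2 := by ring
      _ ≤ |q|^3*1^2 := by gcongr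
      _ = |q|^3 := by ring
  have hqq : q^2 ≤ r^2/9 := by
    have := sq_abs q
    nlinarith [abs_nonneg q]
  set u := 1 - Real.cos q with hu
  have hu0 : 0 ≤ u := by
    have := Real.cos_le_one q; simp only [hu]; linarith
  have hu2 : u ≤ q^2/2 := by
    have := Real.one_sub_sq_div_two_le_cos (x := q); simp only [hu]; linarith
  set y := r^2 + 2*c*u with hy
  clear_value u y
  have hxabs : |2*c*u| ≤ 3*q^2 := by
    rw [abs_mul, abs_mul, abs_of_nonneg hu0]
    calc |2| * |c| * u ≤ 2*3*(q^2/2) := by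
          rw [abs_two]
          gcongr
      _ = 3*q^2 := by ring
  obtain ⟨hxlo, hxhi⟩ := abs_le.mp hxabs
  have hy1 : r^2/2 ≤ y := by
    simp only [hy]; linarith [sq_nonneg r]
  have hy2 : y ≤ 3*r^2/2 := by
    simp only [hy]; linarith [sq_nonneg r]
  have hE := inv_pow32_expand hr hy1 hy2
  have hyr : y - r^2 = 2*c*u := by simp only [hy]; ring
  rw [hyr] at hE
  have hY : (0:ℝ) < y ^ ((3:ℝ)/2) :=
    Real.rpow_pos_of_pos (lt_of_lt_of_le (by positivity) hy1) _
  -- decomposition identity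
  have key : c * Real.sin q / y ^ ((3:ℝ)/2) - (c/r^3 * q - (c/(6*r^3) + 3*c^2/(2*r^5)) * q^3)
      = c/r^3 * (Real.sin q - (q - q^3/6)) + (-(3*c^2/r^5)) * (u*Real.sin q - q^3/2)
        + c * Real.sin q * (1/y^((3:ℝ)/2) - (1/r^3 - (3/2)*(2*c*u)/r^5)) := by
    have h1 : y ^ ((3:ℝ)/2) ≠ 0 := hY.ne'
    have h2 : r ≠ 0 := hr.ne'
    field_simp
    ring
  have hsq := sin_quintic hq1
  have hcq := cos_quintic hq1
  have hsl : |Real.sin q| ≤ |q| := Real.abs_sin_le_abs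
  -- |u sin q - q^3/2| ≤ |q|^5/2
  have h1 : |u - q^2/2| ≤ |q|^4 * (1/24 + 1/50) := by
    have e : |u - (q^2/2 - q^4/24)| = |Real.cos q - (1 - q^2/2 + q^4/24)| := by
      rw [abs_sub_comm]; congr 1; simp only [hu]; ring
    have h := hcq
    rw [← e] at h
    have hq4 : |q^4/24| = |q|^4/24 := by
      rw [abs_div, abs_of_nonneg (by norm_num : (0:ℝ) ≤ (24:ℝ)), ← abs_pow]
    calc |u - q^2/2| = |(u - (q^2/2 - q^4/24)) + (-(q^4/24))| := by congr 1; ring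
      _ ≤ |u - (q^2/2 - q^4/24)| + |(-(q^4/24))| := abs_add_le _ _
      _ ≤ |q|^5*(1/50) + |q|^4/24 := by rw [abs_neg, hq4]; gcongr
      _ ≤ |q|^4 * (1/24 + 1/50) := by nlinarith
  have h2 : |Real.sin q - q| ≤ |q|^3 * (1/6 + 1/50) := by
    have hq3 : |q^3/6| = |q|^3/6 := by
      rw [abs_div, abs_of_nonneg (by norm_num : (0:ℝ) ≤ (6:ℝ)), ← abs_pow]
    calc |Real.sin q - q| = |(Real.sin q - (q - q^3/6)) + (-(q^3/6))| := by congr 1; ring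
      _ ≤ |Real.sin q - (q - q^3/6)| + |(-(q^3/6))| := abs_add_le _ _
      _ ≤ |q|^5*(1/50) + |q|^3/6 := by rw [abs_neg, hq3]; gcongr
      _ ≤ |q|^3 * (1/6 + 1/50) := by nlinarith
  have husin : |u*Real.sin q - q^3/2| ≤ |q|^5/2 := by
    have hq2abs : |q^2/2| = q^2/2 := abs_of_nonneg (by positivity)
    have e : u*Real.sin q - q^3/2 = (u - q^2/2)*Real.sin q + (q^2/2)*(Real.sin q - q) := by ring
    have b1 : |(u - q^2/2)*Real.sin q| ≤ (|q|^4 * (1/24+1/50)) * |q| := by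
      rw [abs_mul]; gcongr
    have b2 : |(q^2/2)*(Real.sin q - q)| ≤ (q^2/2) * (|q|^3 * (1/6+1/50)) := by
      rw [abs_mul, hq2abs]; gcongr
    have hqsq : q^2 = |q|^2 := (sq_abs q).symm
    calc |u*Real.sin q - q^3/2|
        ≤ |(u - q^2/2)*Real.sin q| + |(q^2/2)*(Real.sin q - q)| := by rw [e]; exact abs_add_le _ _
      _ ≤ (|q|^4 * (1/24+1/50)) * |q| + (q^2/2) * (|q|^3 * (1/6+1/50)) := by gcongr
      _ ≤ |q|^5/2 := by rw [hqsq]; nlinarith [pow_nonneg (abs_nonneg q) 5]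
  -- bound the three pieces
  have ht1 : |c/r^3 * (Real.sin q - (q - q^3/6))| ≤ 1/r^3 * |q|^5 := by
    rw [abs_mul, abs_div, abs_of_pos (by positivity : (0:ℝ) < r^3)]
    calc |c|/r^3 * |Real.sin q - (q - q^3/6)| ≤ 3/r^3 * (|q|^5*(1/50)) := by gcongr
      _ ≤ 1/r^3 * |q|^5 := by
          have hx : (0:ℝ) ≤ |q|^5 / r^3 := by positivity
          have e1 : 3/r^3*(|q|^5*(1/50)) = (3/50)*(|q|^5/r^3) := by ring
          have e2 : 1/r^3*|q|^5 = |q|^5/r^3 := by ring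
          rw [e1, e2]; nlinarith
  have ht2 : |(-(3*c^2/r^5)) * (u*Real.sin q - q^3/2)| ≤ 14/r^5 * |q|^5 := by
    rw [abs_mul, abs_neg, abs_div, abs_of_pos (by positivity : (0:ℝ) < r^5)]
    have hcsq : |3*c^2| ≤ 27 := by
      rw [abs_mul, abs_of_nonneg (by norm_num : (0:ℝ) ≤ (3:ℝ)), abs_of_nonneg (sq_nonneg c)]
      nlinarith [sq_abs c, abs_nonneg c]
    calc |3*c^2|/r^5 * |u*Real.sin q - q^3/2| ≤ 27/r^5 * (|q|^5/2) := by gcongr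
      _ ≤ 14/r^5 * |q|^5 := by
          have hx : (0:ℝ) ≤ |q|^5 / r^5 := by positivity
          have e1 : 27/r^5*(|q|^5/2) = (27/2)*(|q|^5/r^5) := by ring
          have e2 : 14/r^5*|q|^5 = 14*(|q|^5/r^5) := by ring
          rw [e1, e2]; nlinarith
  have ht3 : |c * Real.sin q * (1/y^((3:ℝ)/2) - (1/r^3 - (3/2)*(2*c*u)/r^5))|
      ≤ 6264/r^7 * |q|^5 := by
    rw [abs_mul, abs_mul]
    have hx2 : (2*c*u)^2 ≤ 9*q^4 := by nlinarith [sq_abs c, abs_nonneg c, sq_nonneg q]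
    calc |c| * |Real.sin q| * |1/y^((3:ℝ)/2) - (1/r^3 - (3/2)*(2*c*u)/r^5)|
        ≤ 3 * |q| * (232 * (9*q^4) / r^7) := by
          gcongr
          · exact hE.trans (by gcongr)
      _ = 6264/r^7 * (q^4 * |q|) := by ring
      _ = 6264/r^7 * |q|^5 := by
          congr 1
          have : q^4 = |q|^4 := by rw [← abs_pow]; exact (abs_of_nonneg (by positivity)).symm
          rw [this]; ring
  calc |c * Real.sin q / y ^ ((3:ℝ)/2)
      - (c/r^3 * q - (c/(6*r^3) + 3*c^2/(2*r^5)) * q^3)|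
      = |c/r^3 * (Real.sin q - (q - q^3/6)) + (-(3*c^2/r^5)) * (u*Real.sin q - q^3/2)
        + c * Real.sin q * (1/y^((3:ℝ)/2) - (1/r^3 - (3/2)*(2*c*u)/r^5))| := by rw [← key]
    _ ≤ |c/r^3 * (Real.sin q - (q - q^3/6))| + |(-(3*c^2/r^5)) * (u*Real.sin q - q^3/2)|
        + |c * Real.sin q * (1/y^((3:ℝ)/2) - (1/r^3 - (3/2)*(2*c*u)/r^5))| := abs_add_three _ _ _
    _ ≤ 1/r^3 * |q|^5 + 14/r^5 * |q|^5 + 6264/r^7 * |q|^5 := by gcongr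
    _ = (1/r^3 + 14/r^5 + 6264/r^7) * |q|^5 := by ring



/-- The tangential force on the massless particle in the curved Sitnikov problem with
circular primaries (`ε = 0`, `R = 1`, primaries at distance `r` from the center). -/
noncomputable def f0 (q t r : ℝ) : ℝ :=
  -((1 + r * Real.cos t) * Real.sin q /
      (r ^ 2 + 2 + 2 * r * Real.cos t - 2 * Real.cos q -
        2 * r * Real.cos q * Real.cos t) ^ ((3 : ℝ) / 2)) -
    (1 - r * Real.cos t) * Real.sin q /
      (r ^ 2 + 2 - 2 * r * Real.cos t - 2 * Real.cos q +
        2 * r * Real.cos q * Real.cos t) ^ ((3 : ℝ) / 2)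

/-- the expansion
`f₀(q,t;r) = -(2/r³)q + ((9 + r² + 9r² cos²t)/(3r⁵))q³ + O(q⁵)` around `q = 0`,
uniformly in `t`; in particular `∂f₀/∂q(0,t;r) = -2/r³`. -/
theorem f0_expansion_at_zero (r : ℝ) (hr : r ∈ Set.Ioo (0 : ℝ) 2) :
    (∃ C > (0 : ℝ), ∃ q₀ > (0 : ℝ), ∀ t q : ℝ, |q| ≤ q₀ →
      |f0 q t r + 2 / r ^ 3 * q -
        (9 + r ^ 2 + 9 * r ^ 2 * Real.cos t ^ 2) / (3 * r ^ 5) * q ^ 3| ≤ C * |q| ^ 5) ∧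
    (∀ t : ℝ, deriv (fun q => f0 q t r) 0 = -2 / r ^ 3) := by
  obtain ⟨hr0, hr2⟩ := hr
  have main : ∀ t q : ℝ, |q| ≤ min (r/3) 1 →
      |f0 q t r + 2 / r ^ 3 * q -
        (9 + r ^ 2 + 9 * r ^ 2 * Real.cos t ^ 2) / (3 * r ^ 5) * q ^ 3|
      ≤ (2*(1/r^3 + 14/r^5 + 6264/r^7)) * |q| ^ 5 := by
    intro t q hq
    have hq1 : |q| ≤ 1 := le_trans hq (min_le_right _ _)
    have hq2 : |q| ≤ r/3 := le_trans hq (min_le_left _ _)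
    have hct1 := Real.neg_one_le_cos t
    have hct2 := Real.cos_le_one t
    have hA : |1 + r*Real.cos t| ≤ 3 := by
      rw [abs_le]; constructor <;> nlinarith
    have hA' : |1 - r*Real.cos t| ≤ 3 := by
      rw [abs_le]; constructor <;> nlinarith
    have e1 := term_expand hr0 hA hq1 hq2
    have e2 := term_expand hr0 hA' hq1 hq2
    have hf : f0 q t r
        = -((1 + r*Real.cos t) * Real.sin q /
            (r^2 + 2*(1+r*Real.cos t)*(1 - Real.cos q)) ^ ((3:ℝ)/2))
          - (1 - r*Real.cos t) * Real.sin q /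
            (r^2 + 2*(1-r*Real.cos t)*(1 - Real.cos q)) ^ ((3:ℝ)/2) := by
      have d1 : r ^ 2 + 2 + 2 * r * Real.cos t - 2 * Real.cos q - 2 * r * Real.cos q * Real.cos t
          = r^2 + 2*(1+r*Real.cos t)*(1 - Real.cos q) := by ring
      have d2 : r ^ 2 + 2 - 2 * r * Real.cos t - 2 * Real.cos q + 2 * r * Real.cos q * Real.cos t
          = r^2 + 2*(1-r*Real.cos t)*(1 - Real.cos q) := by ring
      unfold f0
      rw [d1, d2]
    have hP : 2 / r^3 * q - (9 + r^2 + 9*r^2*Real.cos t^2)/(3*r^5) * q^3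
        = ((1+r*Real.cos t)/r^3 * q
            - ((1+r*Real.cos t)/(6*r^3) + 3*(1+r*Real.cos t)^2/(2*r^5)) * q^3)
          + ((1-r*Real.cos t)/r^3 * q
            - ((1-r*Real.cos t)/(6*r^3) + 3*(1-r*Real.cos t)^2/(2*r^5)) * q^3) := by
      have h : r ≠ 0 := hr0.ne'
      field_simp
      ring
    have hsplit : f0 q t r + 2 / r ^ 3 * q -
        (9 + r ^ 2 + 9 * r ^ 2 * Real.cos t ^ 2) / (3 * r ^ 5) * q ^ 3
        = -(((1 + r*Real.cos t) * Real.sin q /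
              (r^2 + 2*(1+r*Real.cos t)*(1 - Real.cos q)) ^ ((3:ℝ)/2))
            - ((1+r*Real.cos t)/r^3 * q
              - ((1+r*Real.cos t)/(6*r^3) + 3*(1+r*Real.cos t)^2/(2*r^5)) * q^3))
          + -(((1 - r*Real.cos t) * Real.sin q /
              (r^2 + 2*(1-r*Real.cos t)*(1 - Real.cos q)) ^ ((3:ℝ)/2))
            - ((1-r*Real.cos t)/r^3 * q
              - ((1-r*Real.cos t)/(6*r^3) + 3*(1-r*Real.cos t)^2/(2*r^5)) * q^3)) := by
      rw [hf]
      linear_combination hP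
    rw [hsplit]
    calc |_ + _| ≤ _ := abs_add_le _ _
      _ ≤ (1/r^3 + 14/r^5 + 6264/r^7) * |q|^5 + (1/r^3 + 14/r^5 + 6264/r^7) * |q|^5 := by
          rw [abs_neg, abs_neg]
          exact add_le_add e1 e2
      _ = (2*(1/r^3 + 14/r^5 + 6264/r^7)) * |q| ^ 5 := by ring
  constructor
  · exact ⟨2*(1/r^3 + 14/r^5 + 6264/r^7), by positivity, min (r/3) 1, by positivity, main⟩
  · intro t
    have h0 : f0 0 t r = 0 := by simp [f0]
    have hd : HasDerivAt (fun q => f0 q t r) (-2 / r ^ 3) 0 := by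
      rw [hasDerivAt_iff_isLittleO]
      simp only [smul_eq_mul]
      have hbig : (fun q : ℝ => f0 q t r - f0 0 t r - (q - 0) * (-2 / r ^ 3))
          =O[nhds 0] (fun q : ℝ => |q|^3) := by
        rw [Asymptotics.isBigO_iff]
        refine ⟨|(9 + r ^ 2 + 9 * r ^ 2 * Real.cos t ^ 2) / (3 * r ^ 5)|
          + 2*(1/r^3 + 14/r^5 + 6264/r^7), ?_⟩
        have hev : ∀ᶠ q : ℝ in nhds 0, |q| < min (r/3) 1 := by
          refine Metric.eventually_nhds_iff.mpr ⟨min (r/3) 1, by positivity, fun y hy => ?_⟩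
          simpa [Real.dist_eq] using hy
        filter_upwards [hev] with q hq
        have hb := main t q hq.le
        have hq1 : |q| ≤ 1 := le_trans hq.le (min_le_right _ _)
        have hq35 : |q|^5 ≤ |q|^3 := by
          calc |q|^5 = |q|^3*|q|^2 := by ring
            _ ≤ |q|^3*1^2 := by gcongr
            _ = |q|^3 := by ring
        rw [Real.norm_eq_abs, Real.norm_eq_abs, h0]
        have e : f0 q t r - 0 - (q - 0) * (-2 / r ^ 3)
            = (f0 q t r + 2 / r ^ 3 * q -
                (9 + r ^ 2 + 9 * r ^ 2 * Real.cos t ^ 2) / (3 * r ^ 5) * q ^ 3)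
              + (9 + r ^ 2 + 9 * r ^ 2 * Real.cos t ^ 2) / (3 * r ^ 5) * q ^ 3 := by ring
        rw [e, abs_of_nonneg (by positivity : (0:ℝ) ≤ |q|^3)]
        calc |_ + _| ≤ _ := abs_add_le _ _
          _ ≤ 2*(1/r^3 + 14/r^5 + 6264/r^7) * |q|^5
              + |(9 + r ^ 2 + 9 * r ^ 2 * Real.cos t ^ 2) / (3 * r ^ 5)| * |q|^3 := by
              refine add_le_add hb ?_
              rw [abs_mul, abs_pow]
          _ ≤ _ := by
              have hKnn : (0:ℝ) ≤ 2*(1/r^3 + 14/r^5 + 6264/r^7) := by positivity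
              nlinarith [mul_le_mul_of_nonneg_left hq35 hKnn,
                abs_nonneg ((9 + r ^ 2 + 9 * r ^ 2 * Real.cos t ^ 2) / (3 * r ^ 5)),
                pow_nonneg (abs_nonneg q) 3, pow_nonneg (abs_nonneg q) 5]
      have hsmall : (fun q : ℝ => |q|^3) =o[nhds 0] (fun q : ℝ => q - 0) := by
        simp only [sub_zero]
        rw [Asymptotics.isLittleO_iff]
        intro c hc
        have hev : ∀ᶠ q : ℝ in nhds 0, |q| < min (Real.sqrt c) 1 := by
          refine Metric.eventually_nhds_iff.mpr ⟨min (Real.sqrt c) 1,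
            lt_min (Real.sqrt_pos.mpr hc) one_pos, fun y hy => ?_⟩
          simpa [Real.dist_eq] using hy
        filter_upwards [hev] with q hq
        rw [Real.norm_eq_abs, Real.norm_eq_abs, abs_of_nonneg (by positivity : (0:ℝ) ≤ |q|^3)]
        have h1 : |q| ≤ Real.sqrt c := le_trans hq.le (min_le_left _ _)
        have h2 : |q| ≤ 1 := le_trans hq.le (min_le_right _ _)
        have h3 : |q|^2 ≤ c := by
          calc |q|^2 ≤ (Real.sqrt c)^2 := by gcongr
            _ = c := Real.sq_sqrt hc.le
        calc |q|^3 = |q|^2 * |q| := by ring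
          _ ≤ c * |q| := by gcongr
      exact hbig.trans_isLittleO hsmall
    exact hd.deriv
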